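/- arXiv:2404.08659 — 7 statements merged into one kernel-verified Lean document; each statement's English description precedes it below -/
import Mathlib

section
/- For real parameters k and ω > 0, if x : ℝ → ℝ satisfies ẋ + ω·tan(ω·t + δ)·x = -k·x² on an interval where cos(ω·t + δ) ≠ 0, then x satisfies the cubic anharmonic oscillator equation ẍ + 3k·x·ẋ + k²·x³ + ω²·x = 0 on that interval. -/
/-- Solutions of the Bernoulli equation ẋ + ω tan(ωt+δ) x = -k x² on an open set
where cos(ωt+δ) ≠ 0 satisfy the cubic anharmonic oscillator equation there. -/
theorem stmt5 (k ω δ : ℝ) (hω : 0 < ω) (x : ℝ → ℝ) (s : Set ℝ) (hs : IsOpen s)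
    (hcos : ∀ t ∈ s, Real.cos (ω * t + δ) ≠ 0)
    (hx : ∀ t ∈ s, DifferentiableAt ℝ x t)
    (hx' : ∀ t ∈ s, DifferentiableAt ℝ (deriv x) t)
    (hode : ∀ t ∈ s, deriv x t + ω * Real.tan (ω * t + δ) * x t = -k * (x t)^2) :
    ∀ t ∈ s, deriv (deriv x) t + 3 * k * x t * deriv x t
      + k^2 * (x t)^3 + ω^2 * x t = 0 := by
  intro t ht
  set g : ℝ → ℝ := fun u => -k * (x u)^2 - ω * Real.tan (ω * u + δ) * x u with hg
  have hev : deriv x =ᶠ[nhds t] g := by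
    filter_upwards [hs.mem_nhds ht] with u hu
    have := hode u hu
    simp only [hg]
    linarith
  have hderiv_eq : deriv (deriv x) t = deriv g t := hev.deriv_eq
  -- derivative of the affine map
  have haff : HasDerivAt (fun u : ℝ => ω * u + δ) ω t := by
    simpa using ((hasDerivAt_id t).const_mul ω).add_const δ
  have htan : HasDerivAt (fun u : ℝ => Real.tan (ω * u + δ))
      (1 / Real.cos (ω * t + δ) ^ 2 * ω) t :=
    by have := (Real.hasDerivAt_tan (hcos t ht)).comp t haff; exact this
  have hxd : HasDerivAt x (deriv x t) t := (hx t ht).hasDerivAt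
  have hgd : HasDerivAt g
      (-k * (2 * x t * deriv x t)
        - (ω * (1 / Real.cos (ω * t + δ) ^ 2 * ω) * x t
           + ω * Real.tan (ω * t + δ) * deriv x t)) t := by
    have h1 : HasDerivAt (fun u => -k * (x u)^2) (-k * (2 * x t * deriv x t)) t := by
      simpa using ((hxd.pow 2).const_mul (-k))
    have h2 : HasDerivAt (fun u => ω * Real.tan (ω * u + δ) * x u)
        (ω * (1 / Real.cos (ω * t + δ) ^ 2 * ω) * x t
          + ω * Real.tan (ω * t + δ) * deriv x t) t := by
      simpa [mul_assoc, Pi.mul_def] using ((htan.const_mul ω).mul hxd)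
    exact h1.sub h2
  have hc := hcos t ht
  have hsec : 1 / Real.cos (ω * t + δ) ^ 2 = Real.tan (ω * t + δ) ^ 2 + 1 := by
    rw [Real.tan_eq_sin_div_cos]
    field_simp
    exact (Real.sin_sq_add_cos_sq _).symm
  have hodet := hode t ht
  rw [hderiv_eq, hgd.deriv]
  linear_combination (k * x t - ω * Real.tan (ω * t + δ)) * hodet
    + (-(ω^2) * x t) * hsec
end

section
/- For real constants A, k, ω, δ with ω ≠ 0, the function x(t) = cos(ω·t + δ)/(A + (k/ω)·sin(ω·t + δ)) satisfies ẍ + 3k·x·ẋ + k²·x³ + ω²·x = 0 at every t where A + (k/ω)·sin(ω·t + δ) ≠ 0. -/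
/-- x(t) = cos(ωt+δ)/(A + (k/ω) sin(ωt+δ)) satisfies the cubic anharmonic
oscillator equation wherever the denominator is nonzero. -/
theorem stmt6 (A k ω δ : ℝ) (hω : ω ≠ 0) :
    ∀ t : ℝ, A + (k / ω) * Real.sin (ω * t + δ) ≠ 0 →
      (fun x : ℝ → ℝ =>
        deriv (deriv x) t + 3 * k * x t * deriv x t + k^2 * (x t)^3 + ω^2 * x t = 0)
      (fun s => Real.cos (ω * s + δ) / (A + (k / ω) * Real.sin (ω * s + δ))) := by
  intro t ht
  simp only
  set D : ℝ → ℝ := fun s => A + (k / ω) * Real.sin (ω * s + δ) with hDdef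
  set x : ℝ → ℝ := fun s => Real.cos (ω * s + δ) / D s with hxdef
  -- derivative of inner argument
  have harg : ∀ y : ℝ, HasDerivAt (fun s : ℝ => ω * s + δ) ω y := by
    intro y
    simpa using ((hasDerivAt_id y).const_mul ω).add_const δ
  have hsin : ∀ y : ℝ, HasDerivAt (fun s : ℝ => Real.sin (ω * s + δ))
      (Real.cos (ω * y + δ) * ω) y := fun y => (Real.hasDerivAt_sin _).comp y (harg y)
  have hcos : ∀ y : ℝ, HasDerivAt (fun s : ℝ => Real.cos (ω * s + δ))
      (-Real.sin (ω * y + δ) * ω) y := fun y => (Real.hasDerivAt_cos _).comp y (harg y)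
  have hD : ∀ y : ℝ, HasDerivAt D (k * Real.cos (ω * y + δ)) y := by
    intro y
    have := ((hsin y).const_mul (k / ω)).const_add A
    refine this.congr_deriv ?_
    rw [div_mul_eq_mul_div, div_eq_iff hω]
    ring
  set x1 : ℝ → ℝ := fun y =>
      ((-Real.sin (ω * y + δ) * ω) * D y - Real.cos (ω * y + δ) * (k * Real.cos (ω * y + δ)))
        / (D y) ^ 2 with hx1def
  have hx : ∀ y : ℝ, D y ≠ 0 → HasDerivAt x (x1 y) y := by
    intro y hy
    exact (hcos y).div (hD y) hy
  -- D is nonzero in a neighborhood of t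
  have hDc : Continuous D := by
    apply continuous_const.add
    exact continuous_const.mul ((Real.continuous_sin).comp (by continuity))
  have hnhds : ∀ᶠ y in nhds t, D y ≠ 0 :=
    hDc.continuousAt.eventually_ne ht
  have hEq : deriv x =ᶠ[nhds t] x1 := by
    filter_upwards [hnhds] with y hy
    exact (hx y hy).deriv
  -- derivative of x1 at t
  have hN : HasDerivAt (fun y : ℝ =>
      (-Real.sin (ω * y + δ) * ω) * D y - Real.cos (ω * y + δ) * (k * Real.cos (ω * y + δ)))
      (((-(Real.cos (ω * t + δ) * ω)) * ω) * D t
        + (-Real.sin (ω * t + δ) * ω) * (k * Real.cos (ω * t + δ))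
        - ((-Real.sin (ω * t + δ) * ω) * (k * Real.cos (ω * t + δ))
          + Real.cos (ω * t + δ) * (k * (-Real.sin (ω * t + δ) * ω)))) t := by
    have h1 : HasDerivAt (fun y : ℝ => -Real.sin (ω * y + δ) * ω)
        ((-(Real.cos (ω * t + δ) * ω)) * ω) t := ((hsin t).neg.mul_const ω)
    have h2 : HasDerivAt (fun y : ℝ => k * Real.cos (ω * y + δ))
        (k * (-Real.sin (ω * t + δ) * ω)) t := (hcos t).const_mul k
    exact (h1.mul (hD t)).sub ((hcos t).mul h2)
  have hDsq : HasDerivAt (fun y : ℝ => (D y) ^ 2)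
      (2 * D t * (k * Real.cos (ω * t + δ))) t := by
    have := (hD t).fun_pow 2
    simpa [pow_one, mul_comm, mul_assoc, mul_left_comm] using this
  have hDt : D t ≠ 0 := ht
  have hDsqne : (D t) ^ 2 ≠ 0 := pow_ne_zero 2 hDt
  have hx1 := hN.fun_div hDsq hDsqne
  have hd2 : deriv (deriv x) t = deriv x1 t := by
    exact Filter.EventuallyEq.deriv_eq hEq
  rw [hd2, hx1.deriv, (hx t hDt).deriv]
  simp only [hx1def, hDdef]
  set s := Real.sin (ω * t + δ)
  set c := Real.cos (ω * t + δ)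
  have hE : A * ω + k * s ≠ 0 := by
    intro h
    apply ht
    have : A + k / ω * s = (A * ω + k * s) / ω := by field_simp
    rw [this, h, zero_div]
  have hDt2 : A + k / ω * s ≠ 0 := ht
  field_simp
  ring
end

section
/- For α > 0, v > 0, A, δ ∈ ℝ with |A| > √(α/v), the function U(z) = cos(√(v/α)·z + δ)/(A + √(α/v)·sin(√(v/α)·z + δ)) is defined for all z ∈ ℝ and satisfies U'' + 3U·U' + U³ + (v/α)·U = 0, and is periodic with period 2π·√(α/v). -/
/-- For α, v > 0 and |A| > √(α/v), U(z) = cos(√(v/α)z + δ)/(A + √(α/v) sin(√(v/α)z + δ))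
is globally defined, solves U'' + 3UU' + U³ + (v/α)U = 0, and has period 2π√(α/v). -/
theorem stmt13 (α v A δ : ℝ) (hα : 0 < α) (hv : 0 < v)
    (hA : |A| > Real.sqrt (α / v)) :
    (∀ z : ℝ, A + Real.sqrt (α / v) * Real.sin (Real.sqrt (v / α) * z + δ) ≠ 0) ∧
    (∀ z : ℝ, (fun U : ℝ → ℝ =>
        deriv (deriv U) z + 3 * U z * deriv U z + (U z)^3 + (v / α) * U z = 0)
      (fun z => Real.cos (Real.sqrt (v / α) * z + δ)
        / (A + Real.sqrt (α / v) * Real.sin (Real.sqrt (v / α) * z + δ)))) ∧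
    (∀ z : ℝ,
      Real.cos (Real.sqrt (v / α) * (z + 2 * Real.pi * Real.sqrt (α / v)) + δ)
        / (A + Real.sqrt (α / v)
            * Real.sin (Real.sqrt (v / α) * (z + 2 * Real.pi * Real.sqrt (α / v)) + δ))
      = Real.cos (Real.sqrt (v / α) * z + δ)
        / (A + Real.sqrt (α / v) * Real.sin (Real.sqrt (v / α) * z + δ))) := by
  set k := Real.sqrt (v / α) with hk
  set m := Real.sqrt (α / v) with hm
  have hk0 : 0 < k := Real.sqrt_pos.mpr (by positivity)
  have hm0 : 0 < m := Real.sqrt_pos.mpr (by positivity)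
  have hkm : k * m = 1 := by
    rw [hk, hm, ← Real.sqrt_mul (by positivity),
      show v / α * (α / v) = 1 by field_simp, Real.sqrt_one]
  have hk2 : k ^ 2 = v / α := Real.sq_sqrt (by positivity)
  have hD : ∀ z : ℝ, A + m * Real.sin (k * z + δ) ≠ 0 := by
    intro z hz
    have h1 : |m * Real.sin (k * z + δ)| ≤ m := by
      rw [abs_mul, abs_of_nonneg hm0.le]
      calc m * |Real.sin (k * z + δ)| ≤ m * 1 :=
            mul_le_mul_of_nonneg_left (Real.abs_sin_le_one _) hm0.le
        _ = m := mul_one m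
    have h2 : m * Real.sin (k * z + δ) = -A := by linarith
    rw [h2, abs_neg] at h1
    linarith
  have hU' : ∀ z : ℝ,
      HasDerivAt (fun z => Real.cos (k * z + δ) / (A + m * Real.sin (k * z + δ)))
        (k * (-(A * Real.sin (k * z + δ) + m)) / (A + m * Real.sin (k * z + δ)) ^ 2) z := by
    intro z
    have hlin : HasDerivAt (fun z : ℝ => k * z + δ) k z := by
      simpa using ((hasDerivAt_id z).const_mul k).add_const δ
    have hc : HasDerivAt (fun z => Real.cos (k * z + δ)) (-Real.sin (k * z + δ) * k) z :=
      (Real.hasDerivAt_cos _).comp z hlin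
    have hs : HasDerivAt (fun z => A + m * Real.sin (k * z + δ))
        (m * (Real.cos (k * z + δ) * k)) z :=
      ((((Real.hasDerivAt_sin _).comp z hlin).const_mul m).const_add A)
    have h := hc.div hs (hD z)
    refine h.congr_deriv (Eq.symm ?_)
    linear_combination ((k * m) / (A + m * Real.sin (k * z + δ)) ^ 2) *
      Real.sin_sq_add_cos_sq (k * z + δ)
  have hderiv : deriv (fun z => Real.cos (k * z + δ) / (A + m * Real.sin (k * z + δ)))
      = fun z => k * (-(A * Real.sin (k * z + δ) + m)) / (A + m * Real.sin (k * z + δ)) ^ 2 :=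
    funext fun z => (hU' z).deriv
  have hU'' : ∀ z : ℝ,
      HasDerivAt (fun z => k * (-(A * Real.sin (k * z + δ) + m))
          / (A + m * Real.sin (k * z + δ)) ^ 2)
        ((k * (-(A * (Real.cos (k * z + δ) * k))) * (A + m * Real.sin (k * z + δ)) ^ 2
          - k * (-(A * Real.sin (k * z + δ) + m)) *
            (2 * (A + m * Real.sin (k * z + δ)) ^ 1 * (m * (Real.cos (k * z + δ) * k))))
          / ((A + m * Real.sin (k * z + δ)) ^ 2) ^ 2) z := by
    intro z
    have hlin : HasDerivAt (fun z : ℝ => k * z + δ) k z := by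
      simpa using ((hasDerivAt_id z).const_mul k).add_const δ
    have hs : HasDerivAt (fun z => A + m * Real.sin (k * z + δ))
        (m * (Real.cos (k * z + δ) * k)) z :=
      ((((Real.hasDerivAt_sin _).comp z hlin).const_mul m).const_add A)
    have hn : HasDerivAt (fun z => k * (-(A * Real.sin (k * z + δ) + m)))
        (k * (-(A * (Real.cos (k * z + δ) * k)))) z := by
      have h1 : HasDerivAt (fun z => A * Real.sin (k * z + δ) + m)
          (A * (Real.cos (k * z + δ) * k)) z :=
        (((Real.hasDerivAt_sin _).comp z hlin).const_mul A).add_const m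
      simpa using (h1.neg.const_mul k)
    have hd2 : HasDerivAt (fun z => (A + m * Real.sin (k * z + δ)) ^ 2)
        ((2 : ℕ) * (A + m * Real.sin (k * z + δ)) ^ 1 * (m * (Real.cos (k * z + δ) * k))) z :=
      hs.pow 2
    have := hn.div hd2 (pow_ne_zero 2 (hD z))
    refine this.congr_deriv ?_
    push_cast; ring
  refine ⟨hD, ?_, ?_⟩
  · intro z
    simp only []
    rw [hderiv, (hU'' z).deriv]
    have hsc := Real.sin_sq_add_cos_sq (k * z + δ)
    rw [← hk2]
    field_simp [hD z]
    linear_combination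
      (Real.cos (k * z + δ) *
        (3 * k * A * Real.sin (k * z + δ) + 2 * (k * m + 1) - 3 +
          Real.sin (k * z + δ) ^ 2 * (k * m + 1))) * hkm +
      (Real.cos (k * z + δ)) * hsc
  · intro z
    have harg : k * (z + 2 * Real.pi * m) + δ = (k * z + δ) + 2 * Real.pi := by
      linear_combination (2 * Real.pi) * hkm
    rw [harg, Real.sin_add_two_pi, Real.cos_add_two_pi]
end

section
/- For 0 < |μ| < 2, setting c̃ = √(4 - μ²)/2, any twice-differentiable x solving ẋ + (c̃·tan(c̃·t + δ) - μ/2)·x = -(μ/4)·x³ on an interval where cos(c̃·t + δ) ≠ 0 also solves Wilson's Liénard equation ẍ + μ·(x² - 1)·ẋ + (μ²/16)·x³·(x² - 4) + x = 0 on that interval. -/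
/-- Solutions of ẋ + (c̃ tan(c̃t + δ) - μ/2)x = -(μ/4)x³, c̃ = √(4-μ²)/2, on an open
set where cos(c̃t + δ) ≠ 0 solve Wilson's Liénard equation there. -/
theorem stmt15 (μ δ : ℝ) (hμ : 0 < |μ|) (hμ2 : |μ| < 2)
    (x : ℝ → ℝ) (s : Set ℝ) (hs : IsOpen s)
    (hcos : ∀ t ∈ s, Real.cos (Real.sqrt (4 - μ^2) / 2 * t + δ) ≠ 0)
    (hx : ∀ t ∈ s, DifferentiableAt ℝ x t)
    (hx' : ∀ t ∈ s, DifferentiableAt ℝ (deriv x) t)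
    (hode : ∀ t ∈ s, deriv x t
        + (Real.sqrt (4 - μ^2) / 2 * Real.tan (Real.sqrt (4 - μ^2) / 2 * t + δ)
            - μ / 2) * x t
        = -(μ / 4) * (x t)^3) :
    ∀ t ∈ s, deriv (deriv x) t + μ * ((x t)^2 - 1) * deriv x t
      + (μ^2 / 16) * (x t)^3 * ((x t)^2 - 4) + x t = 0 := by
  intro t ht
  set c : ℝ := Real.sqrt (4 - μ^2) / 2 with hc
  have hμ4 : (0:ℝ) ≤ 4 - μ^2 := by
    have := sq_abs μ
    nlinarith [sq_abs μ, abs_nonneg μ]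
  have hc2 : c^2 = 1 - μ^2/4 := by
    have : Real.sqrt (4 - μ^2) ^ 2 = 4 - μ^2 := Real.sq_sqrt hμ4
    rw [hc, div_pow, this]; ring
  -- deriv x agrees with g near t
  set g : ℝ → ℝ := fun u => (μ/2 - c * Real.tan (c*u + δ)) * x u - (μ/4) * (x u)^3 with hg
  have heq : deriv x =ᶠ[nhds t] g := by
    filter_upwards [hs.mem_nhds ht] with u hu
    have := hode u hu
    simp only [hg]
    linarith
  have hD : Real.cos (c*t + δ) ≠ 0 := hcos t ht
  -- derivative of tan part
  have hlin : HasDerivAt (fun u : ℝ => c*u + δ) c t := by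
    simpa using ((hasDerivAt_id t).const_mul c).add_const δ
  have htan : HasDerivAt (fun u => Real.tan (c*u + δ)) (1 / Real.cos (c*t + δ)^2 * c) t :=
    by have h := (Real.hasDerivAt_tan hD).comp t hlin; exact h
  have hX : HasDerivAt x (deriv x t) t := (hx t ht).hasDerivAt
  have hgd : HasDerivAt g
      ((0 - c * (1 / Real.cos (c*t + δ)^2 * c)) * x t
        + (μ/2 - c * Real.tan (c*t + δ)) * deriv x t
        - μ/4 * ((3:ℕ) * x t ^ 2 * deriv x t)) t := by
    exact (((hasDerivAt_const t (μ/2)).sub (htan.const_mul c)).mul hX).sub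
      ((hX.pow 3).const_mul (μ/4))
  have hdd : deriv (deriv x) t = (0 - c * (1 / Real.cos (c*t + δ)^2 * c)) * x t
        + (μ/2 - c * Real.tan (c*t + δ)) * deriv x t
        - μ/4 * ((3:ℕ) * x t ^ 2 * deriv x t) := by
    rw [heq.deriv_eq]; exact hgd.deriv
  -- 1/cos² in terms of tan
  have hkey : 1 / Real.cos (c*t + δ)^2 = 1 + Real.tan (c*t + δ)^2 := by
    rw [Real.tan_eq_sin_div_cos]
    have h2 := Real.sin_sq_add_cos_sq (c*t + δ)
    field_simp
    linarith
  have hV : deriv x t = (μ/2 - c * Real.tan (c*t + δ)) * x t - (μ/4) * (x t)^3 := by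
    have := hode t ht; linarith
  rw [hdd, hkey, hV]
  set T := Real.tan (c*t + δ)
  push_cast
  linear_combination (-(x t)) * hc2
end

section
/- For 0 < |μ| < 2, c̃ = √(4 - μ²)/2, and A = δ = 0, the function x(t) = cos(c̃·t)/√(1/4 + (μ/4)²·cos(2c̃·t) + (μ·c̃/8)·sin(2c̃·t)) is well-defined for all t ∈ ℝ (the expression under the square root is positive) and satisfies Wilson's Liénard equation ẍ + μ·(x² - 1)·ẋ + (μ²/16)·x³·(x² - 4) + x = 0. -/
noncomputable def Dq (μ c t : ℝ) : ℝ :=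
  1 / 4 + (μ / 4)^2 * Real.cos (2 * c * t) + (μ * c / 8) * Real.sin (2 * c * t)

noncomputable def Dp (μ c t : ℝ) : ℝ :=
  -(μ^2 * c / 8) * Real.sin (2 * c * t) + (μ * c^2 / 4) * Real.cos (2 * c * t)

noncomputable def Dpp (μ c t : ℝ) : ℝ :=
  -(μ^2 * c^2 / 4) * Real.cos (2 * c * t) - (μ * c^3 / 2) * Real.sin (2 * c * t)

noncomputable def Nq (μ c t : ℝ) : ℝ :=
  -(c * Real.sin (c * t)) * Dq μ c t - Real.cos (c * t) * Dp μ c t / 2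

noncomputable def Np (μ c t : ℝ) : ℝ :=
  -(c * (c * Real.cos (c * t) * Dq μ c t + Real.sin (c * t) * Dp μ c t))
    - (-(c * Real.sin (c * t)) * Dp μ c t + Real.cos (c * t) * Dpp μ c t) / 2

lemma cosAux (a t : ℝ) : HasDerivAt (fun t => Real.cos (a * t)) (-a * Real.sin (a * t)) t := by
  have h := (Real.hasDerivAt_cos (a * t)).comp t ((hasDerivAt_id t).const_mul a)
  exact h.congr_deriv (by ring)

lemma sinAux (a t : ℝ) : HasDerivAt (fun t => Real.sin (a * t)) (a * Real.cos (a * t)) t := by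
  have h := (Real.hasDerivAt_sin (a * t)).comp t ((hasDerivAt_id t).const_mul a)
  exact h.congr_deriv (by ring)

lemma hD (μ c t : ℝ) : HasDerivAt (fun t => Dq μ c t) (Dp μ c t) t := by
  have h := ((hasDerivAt_const t ((1:ℝ)/4)).add
      (((cosAux (2*c) t).const_mul ((μ/4)^2)))).add
      ((sinAux (2*c) t).const_mul (μ * c / 8))
  unfold Dq Dp
  exact h.congr_deriv (by ring)

lemma hDp (μ c t : ℝ) : HasDerivAt (fun t => Dp μ c t) (Dpp μ c t) t := by
  have h := (((sinAux (2*c) t).const_mul (-(μ^2 * c / 8))).add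
      ((cosAux (2*c) t).const_mul (μ * c^2 / 4)))
  unfold Dp Dpp
  exact h.congr_deriv (by ring)

lemma hN (μ c t : ℝ) : HasDerivAt (fun t => Nq μ c t) (Np μ c t) t := by
  have h := ((((sinAux c t).const_mul c).neg.mul (hD μ c t)).sub
      (((cosAux c t).mul (hDp μ c t)).div_const 2))
  unfold Nq Np
  exact h.congr_deriv (by simp only [Pi.neg_apply]; ring)

/-- For 0 < |μ| < 2, c̃ = √(4-μ²)/2, the isochronous Wilson waveform
x(t) = cos(c̃t)/√(1/4 + (μ/4)² cos(2c̃t) + (μc̃/8) sin(2c̃t)) is well-defined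
(positive radicand) and satisfies Wilson's Liénard equation for all t. -/
theorem stmt16 (μ : ℝ) (hμ : 0 < |μ|) (hμ2 : |μ| < 2) :
    (∀ t : ℝ, 0 < 1 / 4
        + (μ / 4)^2 * Real.cos (2 * (Real.sqrt (4 - μ^2) / 2) * t)
        + (μ * (Real.sqrt (4 - μ^2) / 2) / 8)
            * Real.sin (2 * (Real.sqrt (4 - μ^2) / 2) * t)) ∧
    (∀ t : ℝ, (fun x : ℝ → ℝ =>
        deriv (deriv x) t + μ * ((x t)^2 - 1) * deriv x t
          + (μ^2 / 16) * (x t)^3 * ((x t)^2 - 4) + x t = 0)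
      (fun t => Real.cos (Real.sqrt (4 - μ^2) / 2 * t)
        / Real.sqrt (1 / 4
            + (μ / 4)^2 * Real.cos (2 * (Real.sqrt (4 - μ^2) / 2) * t)
            + (μ * (Real.sqrt (4 - μ^2) / 2) / 8)
                * Real.sin (2 * (Real.sqrt (4 - μ^2) / 2) * t)))) := by
  have hμ4 : μ^2 < 4 := by nlinarith [sq_abs μ, abs_nonneg μ]
  set c : ℝ := Real.sqrt (4 - μ^2) / 2 with hcdef
  have hc2 : c^2 = (4 - μ^2) / 4 := by
    rw [hcdef, div_pow, Real.sq_sqrt (by linarith : (0:ℝ) ≤ 4 - μ^2)]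
    norm_num
  clear_value c
  have hDpos : ∀ u : ℝ, 0 < Dq μ c u := by
    intro u
    have hab : ((μ/4)^2)^2 + (μ * c / 8)^2 = μ^2/64 := by
      have h : (μ * c / 8)^2 = μ^2 * c^2 / 64 := by ring
      rw [h, hc2]; ring
    unfold Dq
    nlinarith [Real.sin_sq_add_cos_sq (2*c*u),
      sq_nonneg ((μ/4)^2 * Real.sin (2*c*u) - (μ*c/8) * Real.cos (2*c*u)),
      sq_nonneg ((μ/4)^2 * Real.cos (2*c*u) + (μ*c/8) * Real.sin (2*c*u) + 1/4)]
  have hRpos : ∀ u : ℝ, 0 < Real.sqrt (Dq μ c u) := fun u => Real.sqrt_pos.2 (hDpos u)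
  have hR2 : ∀ u : ℝ, Real.sqrt (Dq μ c u) ^ 2 = Dq μ c u := fun u => Real.sq_sqrt (hDpos u).le
  refine ⟨fun t => hDpos t, fun t => ?_⟩
  show deriv (deriv (fun t => Real.cos (c * t) / Real.sqrt (Dq μ c t))) t
      + μ * ((Real.cos (c * t) / Real.sqrt (Dq μ c t))^2 - 1)
        * deriv (fun t => Real.cos (c * t) / Real.sqrt (Dq μ c t)) t
      + (μ^2 / 16) * (Real.cos (c * t) / Real.sqrt (Dq μ c t))^3
        * ((Real.cos (c * t) / Real.sqrt (Dq μ c t))^2 - 4)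
      + Real.cos (c * t) / Real.sqrt (Dq μ c t) = 0
  have hx1 : ∀ u : ℝ, HasDerivAt (fun t => Real.cos (c * t) / Real.sqrt (Dq μ c t))
      (Nq μ c u / (Dq μ c u * Real.sqrt (Dq μ c u))) u := by
    intro u
    have h := (cosAux c u).div ((hD μ c u).sqrt (hDpos u).ne') (hRpos u).ne'
    refine h.congr_deriv ?_
    have hR2u := hR2 u
    have hRneu := (hRpos u).ne'
    rw [Nq]
    set R := Real.sqrt (Dq μ c u) with hRu
    clear_value R
    set Dv := Dq μ c u with hDvu
    clear_value Dv
    rw [← hR2u]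
    field_simp
  have hd1 : deriv (fun t => Real.cos (c * t) / Real.sqrt (Dq μ c t))
      = fun u => Nq μ c u / (Dq μ c u * Real.sqrt (Dq μ c u)) := funext fun u => (hx1 u).deriv
  have hx2 : HasDerivAt (deriv (fun t => Real.cos (c * t) / Real.sqrt (Dq μ c t)))
      ((Np μ c t * Dq μ c t - (3/2) * Nq μ c t * Dp μ c t)
        / ((Dq μ c t)^2 * Real.sqrt (Dq μ c t))) t := by
    rw [hd1]
    have h := (hN μ c t).div ((hD μ c t).mul ((hD μ c t).sqrt (hDpos t).ne'))
      (mul_ne_zero (hDpos t).ne' (hRpos t).ne')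
    refine h.congr_deriv ?_
    simp only [Pi.mul_apply]
    have hR2t := hR2 t
    have hRnet := (hRpos t).ne'
    set R := Real.sqrt (Dq μ c t) with hRt
    clear_value R
    set Dv := Dq μ c t with hDvt
    clear_value Dv
    rw [← hR2t]
    field_simp
    ring
  have key : (Np μ c t * Dq μ c t - (3/2) * Nq μ c t * Dp μ c t)
      + μ * (Real.cos (c*t)^2 - Dq μ c t) * Nq μ c t
      + μ^2/16 * Real.cos (c*t)^3 * (Real.cos (c*t)^2 - 4 * Dq μ c t)
      + Real.cos (c*t) * (Dq μ c t)^2 = 0 := by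
    have hS : Real.sin (c*t)^2 = 1 - Real.cos (c*t)^2 := Real.sin_sq (c*t)
    have h2 : (2:ℝ)*c*t = 2*(c*t) := by ring
    simp only [Np, Nq, Dq, Dp, Dpp, h2, Real.sin_two_mul, Real.cos_two_mul]
    set S := Real.sin (c*t)
    set C := Real.cos (c*t)
    linear_combination ((1/16 : ℝ)*C*c^2*μ^2 + (-1/64 : ℝ)*C*c^2*μ^4 + (-1/16 : ℝ)*C*c^4*μ^2 + (-3/16 : ℝ)*C^3*c^2*μ^2 + (3/64 : ℝ)*C^3*c^2*μ^4 + (3/16 : ℝ)*C^3*c^4*μ^2) * hS + ((-1/16 : ℝ)*C + (1/64 : ℝ)*C*μ^2 + (-1/64 : ℝ)*C*c^2*μ^2 + (1/16 : ℝ)*C^3*c^2*μ^2 + (-1/16 : ℝ)*C^5*μ^2 + (-1/16 : ℝ)*S*c*μ + (1/64 : ℝ)*S*c*μ^3 + (1/8 : ℝ)*S*C^2*c*μ + (-1/32 : ℝ)*S*C^2*c*μ^3) * hc2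
  rw [hx2.deriv, (hx1 t).deriv]
  have hR2t := hR2 t
  have hRne := (hRpos t).ne'
  set R := Real.sqrt (Dq μ c t) with hRdef
  clear_value R
  set Dv := Dq μ c t with hDv
  clear_value Dv
  rw [← hR2t] at key ⊢
  field_simp
  linear_combination 32 * key
end

section
/- For q ≠ 0 and real parameters A ≠ 0, B, C, the functions φ₁(x) = -(A·x^q + B/2 + √Δ/2) and φ₂(x) = -(A·x^q + B/2 - √Δ/2), where Δ = B² - 4C ≥ 0, satisfy φ₁(x)·φ₂(x)·x = A·x^{q+1}·(A·x^q + B) + C·x and φ₂(x) + d(φ₁(x)·x)/dx = -((q+2)·A·x^q + B) for all x > 0, with φ₂ - φ₁ constant. -/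
lemma neg_add_mul_neg_sub_of_sq_eq_discrim {u B C s : ℝ} (hs : s ^ 2 = B ^ 2 - 4 * C) :
    (-(u + B / 2 + s / 2)) * (-(u + B / 2 - s / 2)) = u * (u + B) + C := by
  linear_combination (-1 / 4 : ℝ) * hs

lemma hasDerivAt_rpow_add_const_mul_self {a c q x : ℝ} (hx : 0 < x) :
    HasDerivAt (fun s : ℝ => (a * s ^ q + c) * s) ((q + 1) * a * x ^ q + c) x := by
  have h := (((Real.hasDerivAt_rpow_const (p := q) (Or.inl hx.ne')).const_mul a).add_const c).mul
    (hasDerivAt_id' x)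
  refine h.congr_deriv ?_
  rw [Real.rpow_sub_one hx.ne']
  field_simp
  ring

theorem stmt17_general (q A B C : ℝ) (hΔ : 0 ≤ B^2 - 4*C) :
    (∀ x : ℝ, 0 < x →
      (-(A * x ^ q + B / 2 + Real.sqrt (B^2 - 4*C) / 2))
        * (-(A * x ^ q + B / 2 - Real.sqrt (B^2 - 4*C) / 2)) * x
      = A * x ^ (q + 1) * (A * x ^ q + B) + C * x) ∧
    (∀ x : ℝ, 0 < x →
      (-(A * x ^ q + B / 2 - Real.sqrt (B^2 - 4*C) / 2))
        + deriv (fun s : ℝ =>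
            (-(A * s ^ q + B / 2 + Real.sqrt (B^2 - 4*C) / 2)) * s) x
      = -((q + 2) * A * x ^ q + B)) ∧
    (∃ K : ℝ, ∀ x : ℝ, 0 < x →
      (-(A * x ^ q + B / 2 - Real.sqrt (B^2 - 4*C) / 2))
        - (-(A * x ^ q + B / 2 + Real.sqrt (B^2 - 4*C) / 2)) = K) := by
  refine ⟨fun x hx => ?_, fun x hx => ?_, ⟨Real.sqrt (B^2 - 4*C), fun _ _ => by ring⟩⟩
  · rw [Real.rpow_add_one hx.ne', neg_add_mul_neg_sub_of_sq_eq_discrim (Real.sq_sqrt hΔ)]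
    ring
  · simp only [neg_mul, add_assoc]
    rw [(hasDerivAt_rpow_add_const_mul_self hx).fun_neg.deriv]
    ring

/-- The factoring functions φ₁(x) = -(Ax^q + B/2 + √Δ/2), φ₂(x) = -(Ax^q + B/2 - √Δ/2),
Δ = B² - 4C ≥ 0, satisfy φ₁φ₂x = Ax^{q+1}(Ax^q + B) + Cx and
φ₂ + d(φ₁x)/dx = -((q+2)Ax^q + B) for x > 0, with φ₂ - φ₁ constant. -/
theorem stmt17 (q A B C : ℝ) (hq : q ≠ 0) (hA : A ≠ 0) (hΔ : 0 ≤ B^2 - 4*C) :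
    (∀ x : ℝ, 0 < x →
      (-(A * x ^ q + B / 2 + Real.sqrt (B^2 - 4*C) / 2))
        * (-(A * x ^ q + B / 2 - Real.sqrt (B^2 - 4*C) / 2)) * x
      = A * x ^ (q + 1) * (A * x ^ q + B) + C * x) ∧
    (∀ x : ℝ, 0 < x →
      (-(A * x ^ q + B / 2 - Real.sqrt (B^2 - 4*C) / 2))
        + deriv (fun s : ℝ =>
            (-(A * s ^ q + B / 2 + Real.sqrt (B^2 - 4*C) / 2)) * s) x
      = -((q + 2) * A * x ^ q + B)) ∧
    (∃ K : ℝ, ∀ x : ℝ, 0 < x →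
      (-(A * x ^ q + B / 2 - Real.sqrt (B^2 - 4*C) / 2))
        - (-(A * x ^ q + B / 2 + Real.sqrt (B^2 - 4*C) / 2)) = K) :=
  stmt17_general q A B C hΔ
end

section
/- For A ∈ ℝ with A ≠ 0 and δ, c₁ ∈ ℝ, the function x(t) = e^{-t/2}·cosh(t/6 + δ) / (c₁ - (3A/4)·e^{-t/2}·(sinh(t/6 + δ) + 3·cosh(t/6 + δ))) satisfies ẍ + (3A·x + 1)·ẋ + A²·x³ + A·x² + (2/9)·x = 0 at every t where the denominator is nonzero. -/
open Real

noncomputable def stmt18N (δ : ℝ) (s : ℝ) : ℝ := Real.exp (-s/2) * Real.cosh (s/6+δ)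
noncomputable def stmt18D (A δ c₁ : ℝ) (s : ℝ) : ℝ :=
  c₁ - (3*A/4) * Real.exp (-s/2) * (Real.sinh (s/6+δ) + 3*Real.cosh (s/6+δ))
noncomputable def stmt18N' (δ : ℝ) (s : ℝ) : ℝ :=
  Real.exp (-s/2) * (-(1/2) * Real.cosh (s/6+δ) + (1/6) * Real.sinh (s/6+δ))
noncomputable def stmt18N'' (δ : ℝ) (s : ℝ) : ℝ :=
  Real.exp (-s/2) * ((5/18) * Real.cosh (s/6+δ) - (1/6) * Real.sinh (s/6+δ))

lemma hasDerivAt_stmt18N (δ s : ℝ) : HasDerivAt (stmt18N δ) (stmt18N' δ s) s := by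
  have h1 : HasDerivAt (fun s : ℝ => -s/2) (-(1:ℝ)/2) s :=
    ((hasDerivAt_id s).neg.div_const 2)
  have h2 : HasDerivAt (fun s : ℝ => s/6+δ) ((1:ℝ)/6) s := by
    simpa using ((hasDerivAt_id s).div_const 6).add_const δ
  have := (h1.exp).mul (h2.cosh)
  refine this.congr_deriv ?_
  unfold stmt18N'
  ring

lemma hasDerivAt_stmt18N' (δ s : ℝ) : HasDerivAt (stmt18N' δ) (stmt18N'' δ s) s := by
  have h1 : HasDerivAt (fun s : ℝ => -s/2) (-(1:ℝ)/2) s :=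
    ((hasDerivAt_id s).neg.div_const 2)
  have h2 : HasDerivAt (fun s : ℝ => s/6+δ) ((1:ℝ)/6) s := by
    simpa using ((hasDerivAt_id s).div_const 6).add_const δ
  have := (h1.exp).mul (((h2.cosh.const_mul (-(1/2):ℝ))).add (h2.sinh.const_mul ((1/6):ℝ)))
  refine this.congr_deriv ?_
  unfold stmt18N''
  simp only [Pi.add_apply]
  ring

lemma hasDerivAt_stmt18D (A δ c₁ s : ℝ) :
    HasDerivAt (stmt18D A δ c₁) (A * stmt18N δ s) s := by
  have h1 : HasDerivAt (fun s : ℝ => -s/2) (-(1:ℝ)/2) s :=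
    ((hasDerivAt_id s).neg.div_const 2)
  have h2 : HasDerivAt (fun s : ℝ => s/6+δ) ((1:ℝ)/6) s := by
    simpa using ((hasDerivAt_id s).div_const 6).add_const δ
  have hin : HasDerivAt (fun s : ℝ => Real.sinh (s/6+δ) + 3*Real.cosh (s/6+δ))
      (Real.cosh (s/6+δ) * (1/6) + 3 * (Real.sinh (s/6+δ) * (1/6))) s :=
    h2.sinh.add (h2.cosh.const_mul 3)
  have hprod := (h1.exp).mul hin
  have h4 := ((hprod.const_mul ((3*A/4 : ℝ)))).const_sub c₁
  have hfun : stmt18D A δ c₁ = fun s => c₁ - (3*A/4) * (Real.exp (-s/2) * (Real.sinh (s/6+δ) + 3*Real.cosh (s/6+δ))) := by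
    funext s
    unfold stmt18D
    ring
  rw [hfun]
  refine h4.congr_deriv ?_
  unfold stmt18N
  ring

lemma cont_stmt18D (A δ c₁ : ℝ) : Continuous (stmt18D A δ c₁) := by
  unfold stmt18D
  fun_prop

/-- x(t) = e^{-t/2} cosh(t/6+δ) / (c₁ - (3A/4) e^{-t/2}(sinh(t/6+δ) + 3 cosh(t/6+δ)))
satisfies ẍ + (3Ax + 1)ẋ + A²x³ + Ax² + (2/9)x = 0 where the denominator is nonzero. -/
theorem stmt18 (A δ c₁ : ℝ) (hA : A ≠ 0) :
    ∀ t : ℝ,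
      c₁ - (3 * A / 4) * Real.exp (-t / 2)
          * (Real.sinh (t / 6 + δ) + 3 * Real.cosh (t / 6 + δ)) ≠ 0 →
      (fun x : ℝ → ℝ =>
        deriv (deriv x) t + (3 * A * x t + 1) * deriv x t
          + A^2 * (x t)^3 + A * (x t)^2 + (2 / 9) * x t = 0)
      (fun t => Real.exp (-t / 2) * Real.cosh (t / 6 + δ)
        / (c₁ - (3 * A / 4) * Real.exp (-t / 2)
            * (Real.sinh (t / 6 + δ) + 3 * Real.cosh (t / 6 + δ)))) := by
  intro t ht
  simp only
  have hX : (fun t => Real.exp (-t / 2) * Real.cosh (t / 6 + δ)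
        / (c₁ - (3 * A / 4) * Real.exp (-t / 2)
            * (Real.sinh (t / 6 + δ) + 3 * Real.cosh (t / 6 + δ))))
      = fun s => stmt18N δ s / stmt18D A δ c₁ s := by
    funext s
    unfold stmt18N stmt18D
    ring_nf
  rw [hX]
  set N := stmt18N δ with hNdef
  set D := stmt18D A δ c₁ with hDdef
  set N' := stmt18N' δ with hN'def
  set N'' := stmt18N'' δ with hN''def
  have hDt : D t ≠ 0 := by
    have : D t = c₁ - (3 * A / 4) * Real.exp (-t / 2)
        * (Real.sinh (t / 6 + δ) + 3 * Real.cosh (t / 6 + δ)) := by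
      simp [hDdef, stmt18D]
    rw [this]; exact ht
  set g : ℝ → ℝ := fun s => (N' s * D s - A * (N s)^2) / (D s)^2 with hgdef
  have hderiv : ∀ s, D s ≠ 0 → HasDerivAt (fun u => N u / D u) (g s) s := by
    intro s hs
    have := (hasDerivAt_stmt18N δ s).div (hasDerivAt_stmt18D A δ c₁ s) hs
    refine this.congr_deriv ?_
    simp only [hgdef]
    ring
  have hUopen : IsOpen {s : ℝ | D s ≠ 0} := isOpen_ne.preimage (cont_stmt18D A δ c₁)
  have hmem : {s : ℝ | D s ≠ 0} ∈ nhds t := hUopen.mem_nhds hDt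
  have hEq : deriv (fun u => N u / D u) =ᶠ[nhds t] g := by
    filter_upwards [hmem] with s hs
    exact (hderiv s hs).deriv
  have hg' : HasDerivAt g
      (((N'' t * D t + N' t * (A * N t) - A * (2 * N t * N' t)) * (D t)^2
        - (N' t * D t - A * (N t)^2) * (2 * D t * (A * N t))) / ((D t)^2)^2) t := by
    have hnum : HasDerivAt (fun s => N' s * D s - A * (N s)^2)
        (N'' t * D t + N' t * (A * N t) - A * (2 * N t * N' t)) t := by
      have h1 := (hasDerivAt_stmt18N' δ t).mul (hasDerivAt_stmt18D A δ c₁ t)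
      have h2 := ((hasDerivAt_stmt18N δ t).pow 2).const_mul A
      have h3 := h1.sub h2
      refine h3.congr_deriv ?_
      push_cast
      ring
    have hden : HasDerivAt (fun s => (D s)^2) (2 * D t * (A * N t)) t := by
      have := ((hasDerivAt_stmt18D A δ c₁ t).pow 2)
      refine this.congr_deriv ?_
      push_cast
      ring
    exact hnum.div hden (pow_ne_zero 2 hDt)
  have hxd : deriv (fun u => N u / D u) t = g t := (hderiv t hDt).deriv
  have hxdd : deriv (deriv (fun u => N u / D u)) t
      = (((N'' t * D t + N' t * (A * N t) - A * (2 * N t * N' t)) * (D t)^2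
        - (N' t * D t - A * (N t)^2) * (2 * D t * (A * N t))) / ((D t)^2)^2) := by
    rw [hEq.deriv_eq]
    exact hg'.deriv
  have key : N'' t = -(N' t) - (2/9) * N t := by
    have : N'' t + N' t + (2/9) * N t = 0 := by
      simp only [hN''def, hN'def, hNdef]
      unfold stmt18N stmt18N' stmt18N''
      ring
    linarith
  have hxt : Real.exp (-t / 2) * Real.cosh (t / 6 + δ)
      / (c₁ - (3 * A / 4) * Real.exp (-t / 2)
          * (Real.sinh (t / 6 + δ) + 3 * Real.cosh (t / 6 + δ))) = N t / D t := congrFun hX t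
  have hxd' : deriv (fun u => N u / D u) t
      = (N' t * D t - A * (N t)^2) / (D t)^2 := (hderiv t hDt).deriv
  rw [hxdd, hxd', hxt, key]
  generalize N t = n at hDt ⊢
  generalize N' t = n' at hDt ⊢
  generalize hd : D t = d at hDt ⊢
  field_simp
  ring
end
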